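/- arXiv:1802.09774 — 2 statements merged into one kernel-verified Lean document; each statement's English description precedes it below -/
import Mathlib

section
/- Let P be a PARS over A, let ε > 0, and let f : A → ℝ≥0 be a ranking function for P with parameter ε. Then for every reduction sequence ⃗μ = (μ_n)_{n∈ℕ} of P, E(f(μ_0)) ≥ ε · adl(⃗μ); in particular adl(⃗μ) is finite. -/
open scoped NNReal ENNReal

/-- A finite (probability) distribution on `A`: a finitely supported weight
function with total weight `1`. -/
structure FinDist (A : Type*) where
  w : A →₀ ℝ≥0
  sum_one : w.sum (fun _ p => p) = 1

/-- Multidistributions on `A`: finite multisets of weighted elements `p:a`. -/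
abbrev MD (A : Type*) := Multiset (ℝ≥0 × A)

namespace MD

/-- The total weight `|μ|` of a multidistribution. -/
def wt {A : Type*} (μ : MD A) : ℝ≥0 := (μ.map Prod.fst).sum

/-- Scalar multiplication `p·μ`. -/
def smul {A : Type*} (p : ℝ≥0) (μ : MD A) : MD A :=
  μ.map fun qa => (p * qa.1, qa.2)

/-- The expected value `E(f(μ)) = Σ_{p:a ∈ μ} p·f(a)`. -/
def exp {A : Type*} (f : A → ℝ≥0) (μ : MD A) : ℝ≥0 :=
  (μ.map fun pa => pa.1 * f pa.2).sum

end MD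

namespace FinDist

/-- The multidistribution associated with a finite distribution. -/
def toMD {A : Type*} (d : FinDist A) : MD A :=
  d.w.support.val.map fun a => (d.w a, a)

/-- The expected value `E(f(d)) = Σ_a d(a)·f(a)`. -/
def exp {A : Type*} (f : A → ℝ≥0) (d : FinDist A) : ℝ≥0 :=
  d.w.sum fun a p => p * f a

/-- Pushforward of a finite distribution along a map; this is
`overline(h(d))`, the collapse of the elementwise image of `d`. -/
noncomputable def map {A B : Type*} (h : A → B) (d : FinDist A) : FinDist B :=
  ⟨Finsupp.mapDomain h d.w, by
    rw [Finsupp.sum_mapDomain_index (fun _ => rfl) (fun _ _ _ => rfl)]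
    exact d.sum_one⟩

/-- The Dirac distribution. -/
noncomputable def dirac {A : Type*} (a : A) : FinDist A :=
  ⟨Finsupp.single a 1, by simp⟩

end FinDist

/-- A PARS over `A`: a set of probabilistic reductions `a → d`. -/
abbrev PARS (A : Type*) := A → FinDist A → Prop

/-- `a` is terminal (a normal form) if it has no reduction. -/
def PARS.Terminal {A : Type*} (P : PARS A) (a : A) : Prop := ∀ d, ¬ P a d

/-- The probabilistic reduction relation `⇒_P` on multidistributions. -/
inductive PARS.Step {A : Type*} (P : PARS A) : MD A → MD A → Prop
  | term (a : A) : P.Terminal a → PARS.Step P {(1, a)} 0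
  | rule (a : A) (d : FinDist A) : P a d → PARS.Step P {(1, a)} d.toMD
  | conv (n : ℕ) (p : Fin n → ℝ≥0) (μ ρ : Fin n → MD A) :
      (∑ i, p i) ≤ 1 → (∀ i, PARS.Step P (μ i) (ρ i)) →
      PARS.Step P (∑ i, MD.smul (p i) (μ i)) (∑ i, MD.smul (p i) (ρ i))

/-- An (infinite) reduction sequence of `P`. -/
def PARS.RedSeq {A : Type*} (P : PARS A) (μs : ℕ → MD A) : Prop :=
  ∀ n, P.Step (μs n) (μs (n + 1))

/-- A reduction sequence of `P` starting from `μ`. -/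
def PARS.RedSeqFrom {A : Type*} (P : PARS A) (μ : MD A) (μs : ℕ → MD A) : Prop :=
  μs 0 = μ ∧ P.RedSeq μs

/-- The expected derivation length `adl(⃗μ) = Σ_{n ≥ 1} |μ_n|`. -/
noncomputable def adl {A : Type*} (μs : ℕ → MD A) : ℝ≥0∞ :=
  ∑' n : ℕ, (MD.wt (μs (n + 1)) : ℝ≥0∞)

/-- The expected derivation height `adh_P(a)`. -/
noncomputable def adh {A : Type*} (P : PARS A) (a : A) : ℝ≥0∞ :=
  ⨆ (μs : ℕ → MD A) (_ : P.RedSeqFrom {(1, a)} μs), adl μs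

/-- Strong almost sure termination. -/
def PARS.SAST {A : Type*} (P : PARS A) : Prop := ∀ a, adh P a < ⊤

/-- Almost sure termination. -/
def PARS.AST {A : Type*} (P : PARS A) : Prop :=
  ∀ μs : ℕ → MD A, P.RedSeq μs →
    Filter.Tendsto (fun n => MD.wt (μs n)) Filter.atTop (nhds 0)

/-- `f` is a (probabilistic) ranking function for `P` with parameter `ε`. -/
def PARS.Ranking {A : Type*} (P : PARS A) (ε : ℝ≥0) (f : A → ℝ≥0) : Prop :=
  ∀ a d, P a d → f a ≥ ε + FinDist.exp f d

section Aux

variable {A : Type*} (f : A → ℝ≥0)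

lemma MD.exp_zero : MD.exp f (0 : MD A) = 0 := rfl

lemma MD.wt_zero : MD.wt (0 : MD A) = 0 := rfl

lemma MD.exp_add (μ ν : MD A) : MD.exp f (μ + ν) = MD.exp f μ + MD.exp f ν := by
  simp [MD.exp]

lemma MD.wt_add (μ ν : MD A) : MD.wt (μ + ν) = MD.wt μ + MD.wt ν := by
  simp [MD.wt]

lemma MD.exp_smul (p : ℝ≥0) (μ : MD A) : MD.exp f (MD.smul p μ) = p * MD.exp f μ := by
  simp [MD.exp, MD.smul, Multiset.map_map, Function.comp, mul_assoc,
    ← Multiset.sum_map_mul_left]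

lemma MD.wt_smul (p : ℝ≥0) (μ : MD A) : MD.wt (MD.smul p μ) = p * MD.wt μ := by
  simp [MD.wt, MD.smul, Multiset.map_map, Function.comp, ← Multiset.sum_map_mul_left]

lemma MD.exp_sum {ι : Type*} (s : Finset ι) (μ : ι → MD A) :
    MD.exp f (∑ i ∈ s, μ i) = ∑ i ∈ s, MD.exp f (μ i) := by
  classical
  induction s using Finset.induction with
  | empty => simp [MD.exp_zero]
  | insert _ _ h ih => simp [Finset.sum_insert h, MD.exp_add, ih]

lemma MD.wt_sum {ι : Type*} (s : Finset ι) (μ : ι → MD A) :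
    MD.wt (∑ i ∈ s, μ i) = ∑ i ∈ s, MD.wt (μ i) := by
  classical
  induction s using Finset.induction with
  | empty => simp [MD.wt_zero]
  | insert _ _ h ih => simp [Finset.sum_insert h, MD.wt_add, ih]

lemma MD.exp_singleton (p : ℝ≥0) (a : A) : MD.exp f ({(p, a)} : MD A) = p * f a := by
  simp [MD.exp]

lemma FinDist.wt_toMD (d : FinDist A) : MD.wt d.toMD = 1 := by
  have h : MD.wt d.toMD = d.w.sum fun _ p => p := by
    rw [MD.wt, FinDist.toMD, Multiset.map_map]; rfl
  rw [h, d.sum_one]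

lemma FinDist.exp_toMD (d : FinDist A) : MD.exp f d.toMD = FinDist.exp f d := by
  rw [MD.exp, FinDist.toMD, Multiset.map_map]; rfl

lemma step_exp (P : PARS A) (ε : ℝ≥0) (hf : P.Ranking ε f) {μ ρ : MD A}
    (h : P.Step μ ρ) : ε * MD.wt ρ + MD.exp f ρ ≤ MD.exp f μ := by
  induction h with
  | term a _ => simp [MD.wt_zero, MD.exp_zero]
  | rule a d hd =>
      rw [FinDist.wt_toMD, FinDist.exp_toMD, MD.exp_singleton, mul_one, one_mul]
      exact hf a d hd
  | conv n p μ ρ hp hstep ih =>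
      rw [MD.wt_sum, MD.exp_sum, MD.exp_sum, Finset.mul_sum, ← Finset.sum_add_distrib]
      refine Finset.sum_le_sum fun i _ => ?_
      rw [MD.wt_smul, MD.exp_smul, MD.exp_smul]
      calc ε * (p i * MD.wt (ρ i)) + p i * MD.exp f (ρ i)
          = p i * (ε * MD.wt (ρ i) + MD.exp f (ρ i)) := by ring
        _ ≤ p i * MD.exp f (μ i) := by
            exact mul_le_mul_right (ih i) _

lemma partial_bound (P : PARS A) (ε : ℝ≥0) (hf : P.Ranking ε f)
    (μs : ℕ → MD A) (hseq : P.RedSeq μs) (N : ℕ) :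
    ε * ∑ n ∈ Finset.range N, MD.wt (μs (n + 1)) ≤ MD.exp f (μs 0) := by
  have key : ∀ N, ε * (∑ n ∈ Finset.range N, MD.wt (μs (n + 1))) + MD.exp f (μs N)
      ≤ MD.exp f (μs 0) := by
    intro N
    induction N with
    | zero => simp
    | succ N ih =>
        rw [Finset.sum_range_succ, mul_add]
        calc ε * ∑ n ∈ Finset.range N, MD.wt (μs (n + 1))
              + ε * MD.wt (μs (N + 1)) + MD.exp f (μs (N + 1))
            = ε * ∑ n ∈ Finset.range N, MD.wt (μs (n + 1))
              + (ε * MD.wt (μs (N + 1)) + MD.exp f (μs (N + 1))) := by ring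
          _ ≤ ε * ∑ n ∈ Finset.range N, MD.wt (μs (n + 1)) + MD.exp f (μs N) :=
              add_le_add_right (step_exp f P ε hf (hseq N)) _
          _ ≤ MD.exp f (μs 0) := ih
  exact le_trans (le_add_right le_rfl) (key N)

end Aux

/-- `E(f(μ_0)) ≥ ε · adl(⃗μ)` for every reduction sequence;
in particular `adl(⃗μ)` is finite. -/
theorem stmt_3 {A : Type*} [Countable A] (P : PARS A) (ε : ℝ≥0) (hε : 0 < ε)
    (f : A → ℝ≥0) (hf : P.Ranking ε f)
    (μs : ℕ → MD A) (hseq : P.RedSeq μs) :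
    (MD.exp f (μs 0) : ℝ≥0∞) ≥ (ε : ℝ≥0∞) * adl μs ∧ adl μs < ⊤ := by
  have hmain : (ε : ℝ≥0∞) * adl μs ≤ (MD.exp f (μs 0) : ℝ≥0∞) := by
    have hrw : adl μs = ⨆ N : ℕ, ∑ n ∈ Finset.range N, (MD.wt (μs (n + 1)) : ℝ≥0∞) :=
      ENNReal.tsum_eq_iSup_sum' Finset.range fun t => Finset.exists_nat_subset_range t
    rw [hrw, ENNReal.mul_iSup]
    refine iSup_le fun N => ?_
    have := partial_bound f P ε hf μs hseq N
    calc (ε : ℝ≥0∞) * ∑ n ∈ Finset.range N, (MD.wt (μs (n + 1)) : ℝ≥0∞)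
        = ((ε * ∑ n ∈ Finset.range N, MD.wt (μs (n + 1)) : ℝ≥0) : ℝ≥0∞) := by
          push_cast; ring
      _ ≤ (MD.exp f (μs 0) : ℝ≥0∞) := by exact_mod_cast this
  refine ⟨hmain, ?_⟩
  by_contra h
  rw [not_lt, top_le_iff] at h
  rw [h, ENNReal.mul_top (by exact_mod_cast hε.ne')] at hmain
  exact ENNReal.coe_ne_top (top_le_iff.mp hmain)
end

section
/- Let 0 ≤ p ≤ 1 and let A_rw[p] be the PARS over ℕ whose probabilistic reductions are exactly n+1 → ⟨p:n; 1−p:n+2⟩ for every n ∈ ℕ (when p = 1 or p = 0 the right-hand side is the corresponding Dirac distribution). Then A_rw[p] is almost surely terminating if and only if p ≥ 1/2. -/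
open scoped NNReal ENNReal

/-! ### Auxiliary development -/

namespace MD

variable {A : Type*}

@[simp] lemma wt_zero_s8 : wt (0 : MD A) = 0 := rfl

lemma wt_add_s8 (μ ρ : MD A) : wt (μ + ρ) = wt μ + wt ρ := by
  simp [wt]

lemma wt_smul_s8 (p : ℝ≥0) (μ : MD A) : wt (smul p μ) = p * wt μ := by
  simp only [wt, smul, Multiset.map_map, Function.comp]
  rw [← Multiset.sum_map_mul_left]

@[simp] lemma exp_zero_s8 (f : A → ℝ≥0) : exp f (0 : MD A) = 0 := rfl

lemma exp_add_s8 (f : A → ℝ≥0) (μ ρ : MD A) : exp f (μ + ρ) = exp f μ + exp f ρ := by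
  simp [exp]

lemma exp_smul_s8 (f : A → ℝ≥0) (p : ℝ≥0) (μ : MD A) :
    exp f (smul p μ) = p * exp f μ := by
  simp only [exp, smul, Multiset.map_map, Function.comp]
  rw [← Multiset.sum_map_mul_left]
  simp [mul_assoc]

/-- `wt` as an additive monoid hom. -/
def wtHom : MD A →+ ℝ≥0 where
  toFun := wt
  map_zero' := rfl
  map_add' := wt_add_s8

/-- `exp f` as an additive monoid hom. -/
def expHom (f : A → ℝ≥0) : MD A →+ ℝ≥0 where
  toFun := exp f
  map_zero' := rfl
  map_add' := exp_add_s8 f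

lemma wt_sum_s8 {n : ℕ} (g : Fin n → MD A) : wt (∑ i, g i) = ∑ i, wt (g i) :=
  map_sum wtHom g Finset.univ

lemma exp_sum_s8 (f : A → ℝ≥0) {n : ℕ} (g : Fin n → MD A) :
    exp f (∑ i, g i) = ∑ i, exp f (g i) :=
  map_sum (expHom f) g Finset.univ

@[simp] lemma wt_single (q : ℝ≥0) (a : A) : wt ({(q, a)} : MD A) = q := by
  simp [wt]

@[simp] lemma exp_single (f : A → ℝ≥0) (q : ℝ≥0) (a : A) :
    exp f ({(q, a)} : MD A) = q * f a := by
  simp [exp]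

end MD

namespace FinDist

variable {A : Type*}

lemma wt_toMD_s8 (d : FinDist A) : MD.wt d.toMD = 1 := by
  rw [← d.sum_one]
  simp only [MD.wt, toMD, Multiset.map_map, Function.comp]
  rfl

lemma exp_toMD_s8 (f : A → ℝ≥0) (d : FinDist A) : MD.exp f d.toMD = d.exp f := by
  simp only [MD.exp, toMD, Multiset.map_map, Function.comp, FinDist.exp]
  rfl

end FinDist

section RandomWalk

variable (p : ℝ≥0)

/-- The weight function of the random-walk distribution from state `m+1`. -/
noncomputable def rwW (m : ℕ) : ℕ →₀ ℝ≥0 :=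
  Finsupp.single m p + Finsupp.single (m + 2) (1 - p)

lemma rwW_apply (m k : ℕ) :
    rwW p m k = if k = m then p else if k = m + 2 then 1 - p else 0 := by
  simp only [rwW, Finsupp.add_apply, Finsupp.single_apply]
  split_ifs <;> first | rfl | omega | simp

/-- The random-walk distribution from state `m+1`. -/
noncomputable def dRW (hp1 : p ≤ 1) (m : ℕ) : FinDist ℕ :=
  ⟨rwW p m, by
    rw [rwW, Finsupp.sum_add_index' (fun _ => rfl) (fun _ _ _ => rfl),
      Finsupp.sum_single_index rfl, Finsupp.sum_single_index rfl]
    exact add_tsub_cancel_of_le hp1⟩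

lemma exp_of_w_eq (d : FinDist ℕ) (m : ℕ) (hw : d.w = rwW p m) (f : ℕ → ℝ≥0) :
    d.exp f = p * f m + (1 - p) * f (m + 2) := by
  unfold FinDist.exp
  rw [hw, rwW, Finsupp.sum_add_index' (fun a => zero_mul (f a))
      (fun a b c => add_mul b c (f a)),
    Finsupp.sum_single_index (zero_mul (f m)), Finsupp.sum_single_index (zero_mul (f (m + 2)))]

variable {P : PARS ℕ}
variable (hP : ∀ (a : ℕ) (d : FinDist ℕ), P a d ↔ ∃ m : ℕ, a = m + 1 ∧
      ∀ k : ℕ, d.w k = if k = m then p else if k = m + 2 then 1 - p else 0)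

include hP

lemma w_eq_rwW {a : ℕ} {d : FinDist ℕ} (h : P a d) :
    ∃ m : ℕ, a = m + 1 ∧ d.w = rwW p m := by
  obtain ⟨m, rfl, hw⟩ := (hP a d).1 h
  exact ⟨m, rfl, Finsupp.ext fun k => by rw [hw k, rwW_apply]⟩

lemma P_dRW (hp1 : p ≤ 1) (m : ℕ) : P (m + 1) (dRW p hp1 m) :=
  (hP _ _).2 ⟨m, rfl, fun k => by rw [show (dRW p hp1 m).w = rwW p m from rfl, rwW_apply]⟩

lemma zero_terminal : P.Terminal 0 := by
  intro d hd
  obtain ⟨m, hm, -⟩ := (hP 0 d).1 hd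
  omega

lemma step_singleton (hp1 : p ≤ 1) (a : ℕ) : ∃ ρ, P.Step {(1, a)} ρ := by
  cases a with
  | zero => exact ⟨0, PARS.Step.term 0 (zero_terminal p hP)⟩
  | succ m => exact ⟨(dRW p hp1 m).toMD, PARS.Step.rule _ _ (P_dRW p hP hp1 m)⟩

end RandomWalk

section StepFacts

variable {A : Type*} {P : PARS A}

lemma list_map_sum_fin {M : Type*} [AddCommMonoid M] (l : List (ℝ≥0 × A)) (g : ℝ≥0 × A → M) :
    ∑ i : Fin l.length, g (l.get i) = (l.map g).sum := by
  rw [← List.sum_ofFn, show (List.ofFn fun i => g (l.get i)) = l.map g from by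
    rw [show (fun i => g (l.get i)) = g ∘ l.get from rfl, ← List.map_ofFn, List.ofFn_get]]

lemma sum_singletons (l : List (ℝ≥0 × A)) :
    ∑ i : Fin l.length, ({l.get i} : MD A) = (l : MD A) := by
  rw [list_map_sum_fin l (fun x => ({x} : MD A))]
  induction l with
  | nil => rfl
  | cons a t ih => simp_all [ih]

lemma wt_le_of_step {μ ρ : MD A} (h : P.Step μ ρ) : MD.wt ρ ≤ MD.wt μ := by
  induction h with
  | term a _ => simp
  | rule a d _ => rw [FinDist.wt_toMD_s8]; simp
  | conv n q μs ρs hq hstep ih =>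
    rw [MD.wt_sum_s8, MD.wt_sum_s8]
    exact Finset.sum_le_sum fun i _ => by
      rw [MD.wt_smul_s8, MD.wt_smul_s8]; exact mul_le_mul_right (ih i) _

lemma exists_step (hsing : ∀ a : A, ∃ ρ, P.Step {(1, a)} ρ)
    (μ : MD A) (hwt : MD.wt μ ≤ 1) : ∃ ρ, P.Step μ ρ := by
  classical
  choose ρf hρf using hsing
  set l := μ.toList with hl
  have hsum : (∑ i : Fin l.length, (l.get i).1) ≤ 1 := by
    rw [list_map_sum_fin l Prod.fst]
    have : ((l : MD A).map Prod.fst).sum = MD.wt μ := by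
      rw [hl, Multiset.coe_toList]; rfl
    rw [Multiset.map_coe, Multiset.sum_coe] at this
    rw [this]; exact hwt
  refine ⟨∑ i : Fin l.length, MD.smul (l.get i).1 (ρf (l.get i).2), ?_⟩
  have hstep := PARS.Step.conv (P := P) l.length (fun i => (l.get i).1)
    (fun i => {(1, (l.get i).2)}) (fun i => ρf (l.get i).2) hsum (fun i => hρf _)
  have hsrc : (∑ i : Fin l.length, MD.smul (l.get i).1 ({(1, (l.get i).2)} : MD A)) = μ := by
    have h1 : ∀ i : Fin l.length,
        MD.smul (l.get i).1 ({(1, (l.get i).2)} : MD A) = ({l.get i} : MD A) := by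
      intro i; simp [MD.smul]
    rw [Finset.sum_congr rfl (fun i _ => h1 i), sum_singletons, hl, Multiset.coe_toList]
  rwa [hsrc] at hstep

end StepFacts

section Survival

/-- `v p n a`: survival probability for `n` steps of the random walk from `a`. -/
noncomputable def v (p : ℝ≥0) : ℕ → ℕ → ℝ≥0
  | 0, _ => 1
  | _ + 1, 0 => 0
  | n + 1, m + 1 => p * v p n m + (1 - p) * v p n (m + 2)

variable {p : ℝ≥0}

@[simp] lemma v_zero (a : ℕ) : v p 0 a = 1 := rfl
@[simp] lemma v_succ_zero (n : ℕ) : v p (n + 1) 0 = 0 := rfl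
lemma v_succ_succ (n m : ℕ) :
    v p (n + 1) (m + 1) = p * v p n m + (1 - p) * v p n (m + 2) := rfl

lemma v_le_one (hp1 : p ≤ 1) : ∀ n a, v p n a ≤ 1 := by
  intro n
  induction n with
  | zero => intro a; simp
  | succ n ih =>
    intro a
    cases a with
    | zero => simp
    | succ m =>
      rw [v_succ_succ]
      calc p * v p n m + (1 - p) * v p n (m + 2) ≤ p * 1 + (1 - p) * 1 :=
            add_le_add (mul_le_mul_right (ih m) p) (mul_le_mul_right (ih (m + 2)) _)
        _ = 1 := by rw [mul_one, mul_one, add_tsub_cancel_of_le hp1]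

lemma v_succ_le (hp1 : p ≤ 1) : ∀ n a, v p (n + 1) a ≤ v p n a := by
  intro n
  induction n with
  | zero => intro a; exact v_le_one hp1 1 a
  | succ n ih =>
    intro a
    cases a with
    | zero => simp
    | succ m =>
      rw [v_succ_succ, v_succ_succ]
      exact add_le_add (mul_le_mul_right (ih m) p) (mul_le_mul_right (ih (m + 2)) _)

lemma v_antitone (hp1 : p ≤ 1) (a : ℕ) : Antitone fun n => v p n a :=
  antitone_nat_of_succ_le fun n => v_succ_le hp1 n a

lemma v_mono_state : ∀ n a, v p n a ≤ v p n (a + 1) := by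
  intro n
  induction n with
  | zero => intro a; simp
  | succ n ih =>
    intro a
    cases a with
    | zero => simp
    | succ m =>
      rw [v_succ_succ, v_succ_succ]
      exact add_le_add (mul_le_mul_right (ih m) p) (mul_le_mul_right (ih (m + 2)) _)

/-- The limit of the survival probabilities. -/
noncomputable def vL (p : ℝ≥0) (a : ℕ) : ℝ≥0 := ⨅ n, v p n a

lemma tendsto_v_vL (hp1 : p ≤ 1) (a : ℕ) :
    Filter.Tendsto (fun n => v p n a) Filter.atTop (nhds (vL p a)) :=
  tendsto_atTop_ciInf (v_antitone hp1 a) (OrderBot.bddBelow _)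

lemma vL_zero' : vL p 0 = 0 := by
  refine le_antisymm ?_ zero_le
  exact ciInf_le_of_le (OrderBot.bddBelow _) 1 (by simp)

lemma vL_rec (hp1 : p ≤ 1) (m : ℕ) :
    vL p (m + 1) = p * vL p m + (1 - p) * vL p (m + 2) := by
  have h1 : Filter.Tendsto (fun n => v p (n + 1) (m + 1)) Filter.atTop (nhds (vL p (m + 1))) :=
    (tendsto_v_vL hp1 (m + 1)).comp (Filter.tendsto_add_atTop_nat 1)
  have h2 : Filter.Tendsto (fun n => p * v p n m + (1 - p) * v p n (m + 2)) Filter.atTop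
      (nhds (p * vL p m + (1 - p) * vL p (m + 2))) :=
    ((tendsto_v_vL hp1 m).const_mul p).add ((tendsto_v_vL hp1 (m + 2)).const_mul (1 - p))
  have : (fun n => v p (n + 1) (m + 1)) = fun n => p * v p n m + (1 - p) * v p n (m + 2) := by
    funext n; exact v_succ_succ n m
  rw [this] at h1
  exact tendsto_nhds_unique h1 h2

lemma vL_le_one (hp1 : p ≤ 1) (a : ℕ) : vL p a ≤ 1 :=
  ciInf_le_of_le (OrderBot.bddBelow _) 0 (by simp)

lemma vL_mono (a : ℕ) : vL p a ≤ vL p (a + 1) :=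
  le_ciInf fun n => (ciInf_le (OrderBot.bddBelow _) n).trans (v_mono_state n a)

lemma vL_eq_zero (hp1 : p ≤ 1) (hp : 1 / 2 ≤ p) (a : ℕ) : vL p a = 0 := by
  rcases eq_or_lt_of_le hp1 with hpe | hplt
  · -- p = 1
    have h1p : (1 : ℝ≥0) - p = 0 := by rw [hpe, tsub_self]
    induction a with
    | zero => exact vL_zero'
    | succ m ih =>
      rw [vL_rec hp1 m, ih, mul_zero, h1p, zero_mul, add_zero]
  · -- p < 1 : work in ℝ
    set ℓ : ℕ → ℝ := fun a => (vL p a : ℝ) with hℓ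
    have hℓ0 : ℓ 0 = 0 := by simp [hℓ, vL_zero']
    have hrec : ∀ m, ℓ (m + 1) = p * ℓ m + (1 - (p : ℝ)) * ℓ (m + 2) := by
      intro m
      have := vL_rec hp1 m
      have hc : ((1 - p : ℝ≥0) : ℝ) = 1 - (p : ℝ) := by
        rw [NNReal.coe_sub hp1, NNReal.coe_one]
      calc ℓ (m + 1) = ((p * vL p m + (1 - p) * vL p (m + 2) : ℝ≥0) : ℝ) := by
            rw [hℓ]; exact_mod_cast congrArg _ this
        _ = p * ℓ m + (1 - (p : ℝ)) * ℓ (m + 2) := by push_cast [hc]; ring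
    have hle1 : ∀ a, ℓ a ≤ 1 := fun a => by exact_mod_cast vL_le_one hp1 a
    have hmono : ∀ a, ℓ a ≤ ℓ (a + 1) := fun a => by exact_mod_cast vL_mono a
    set δ : ℕ → ℝ := fun m => ℓ (m + 1) - ℓ m with hδ
    have hδ0 : ∀ m, 0 ≤ δ m := fun m => sub_nonneg.2 (hmono m)
    have hp2 : (1 : ℝ) / 2 ≤ (p : ℝ) := by exact_mod_cast hp
    have hplt' : (p : ℝ) < 1 := by exact_mod_cast hplt
    have h1pp : (0 : ℝ) < 1 - (p : ℝ) := by linarith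
    have hkey : ∀ m, δ (m + 1) * (1 - (p : ℝ)) = δ m * p := by
      intro m
      have := hrec m
      simp only [hδ]
      linarith [this]
    have hstep : ∀ m, δ m ≤ δ (m + 1) := by
      intro m
      have h1 : δ m * (1 - (p : ℝ)) ≤ δ m * p := by
        apply mul_le_mul_of_nonneg_left _ (hδ0 m); linarith
      rw [← hkey m] at h1
      exact le_of_mul_le_mul_right h1 h1pp
    have hδmono : ∀ m, δ 0 ≤ δ m := by
      intro m; induction m with
      | zero => exact le_refl _
      | succ k ih => exact ih.trans (hstep k)
    have hlow : ∀ n : ℕ, (n : ℝ) * δ 0 ≤ ℓ n := by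
      intro n; induction n with
      | zero => simp [hℓ0]
      | succ k ih =>
        have : ℓ (k + 1) = ℓ k + δ k := by simp [hδ]
        rw [this]; push_cast
        have := hδmono k
        nlinarith
    have hδ00 : δ 0 = 0 := by
      by_contra hne
      have hpos : 0 < δ 0 := lt_of_le_of_ne (hδ0 0) (Ne.symm hne)
      obtain ⟨n, hn⟩ := exists_nat_gt (1 / δ 0)
      have := hlow n
      have h2 := hle1 n
      rw [div_lt_iff₀ hpos] at hn
      linarith
    have hδall : ∀ m, δ m = 0 := by
      intro m; induction m with
      | zero => exact hδ00
      | succ k ih =>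
        have := hkey k
        rw [ih, zero_mul] at this
        have := mul_eq_zero.1 this
        rcases this with h | h
        · exact h
        · linarith
    have hℓall : ∀ a, ℓ a = 0 := by
      intro a; induction a with
      | zero => exact hℓ0
      | succ k ih =>
        have : ℓ (k + 1) = ℓ k + δ k := by simp [hδ]
        rw [this, ih, hδall k, add_zero]
    have h := hℓall a
    simp only [hℓ] at h
    exact_mod_cast h

lemma tendsto_v_zero (hp1 : p ≤ 1) (hp : 1 / 2 ≤ p) (a : ℕ) :
    Filter.Tendsto (fun n => v p n a) Filter.atTop (nhds 0) := by
  have := tendsto_v_vL hp1 a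
  rwa [vL_eq_zero hp1 hp a] at this

end Survival

section MainLemmas

variable {p : ℝ≥0} {P : PARS ℕ}
variable (hP : ∀ (a : ℕ) (d : FinDist ℕ), P a d ↔ ∃ m : ℕ, a = m + 1 ∧
      ∀ k : ℕ, d.w k = if k = m then p else if k = m + 2 then 1 - p else 0)

include hP

lemma exp_v_step_le {μ ρ : MD ℕ} (h : P.Step μ ρ) (n : ℕ) :
    MD.exp (v p n) ρ ≤ MD.exp (v p (n + 1)) μ := by
  induction h with
  | term a _ => exact zero_le
  | rule a d hd =>
    obtain ⟨m, rfl, hw⟩ := w_eq_rwW p hP hd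
    rw [FinDist.exp_toMD_s8, exp_of_w_eq p d m hw, MD.exp_single, one_mul, ← v_succ_succ]
  | conv k q μs ρs hq hstep ih =>
    rw [MD.exp_sum_s8, MD.exp_sum_s8]
    exact Finset.sum_le_sum fun i _ => by
      rw [MD.exp_smul_s8, MD.exp_smul_s8]; exact mul_le_mul_right (ih i) _

lemma wt_le_exp_v : ∀ (n : ℕ) (μs : ℕ → MD ℕ), P.RedSeq μs →
    MD.wt (μs n) ≤ MD.exp (v p n) (μs 0) := by
  intro n
  induction n with
  | zero =>
    intro μs _
    have : MD.exp (v p 0) (μs 0) = MD.wt (μs 0) := by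
      simp [MD.exp, MD.wt]
    rw [this]
  | succ n ih =>
    intro μs hseq
    have h1 : MD.wt (μs (n + 1)) ≤ MD.exp (v p n) (μs 1) :=
      ih (fun k => μs (k + 1)) (fun k => hseq (k + 1))
    exact h1.trans (exp_v_step_le hP (hseq 0) n)

/-- Invariant for the biased walk with `p < 1/2`. -/
lemma step_invariant (hp1 : p ≤ 1) (hq : (1 : ℝ≥0) - p ≠ 0) {μ ρ : MD ℕ} (h : P.Step μ ρ) :
    MD.wt ρ + MD.exp (fun a => (p / (1 - p)) ^ a) μ
      = MD.wt μ + MD.exp (fun a => (p / (1 - p)) ^ a) ρ := by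
  set q : ℝ≥0 := 1 - p with hqdef
  set r : ℝ≥0 := p / q with hrdef
  have hpq : p + q = 1 := add_tsub_cancel_of_le hp1
  induction h with
  | term a ht =>
    cases a with
    | zero => simp
    | succ m => exact absurd (P_dRW p hP hp1 m) (ht _)
  | rule a d hd =>
    obtain ⟨m, rfl, hw⟩ := w_eq_rwW p hP hd
    rw [FinDist.wt_toMD_s8, FinDist.exp_toMD_s8, exp_of_w_eq p d m hw, MD.wt_single,
      MD.exp_single, one_mul]
    have hqr : q * r = p := by
      rw [hrdef, mul_comm]; exact div_mul_cancel₀ p hq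
    have hr : p + p * r = r := by
      have h1 : r * (p + q) = r := by rw [hpq, mul_one]
      rw [mul_add, mul_comm r q, hqr] at h1
      calc p + p * r = r * p + p := by ring
        _ = r := h1
    have key : p * r ^ m + q * r ^ (m + 2) = r ^ (m + 1) := by
      calc p * r ^ m + q * r ^ (m + 2) = p * r ^ m + (q * r) * r ^ (m + 1) := by
            rw [pow_succ r (m + 1)]; ring
        _ = p * r ^ m + p * (r ^ m * r) := by rw [hqr, pow_succ]
        _ = (p + p * r) * r ^ m := by ring
        _ = r ^ (m + 1) := by rw [hr, pow_succ]; ring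
    rw [key]
  | conv k qs μs ρs hq hstep ih =>
    rw [MD.wt_sum_s8, MD.exp_sum_s8, MD.wt_sum_s8, MD.exp_sum_s8]
    simp only [MD.wt_smul_s8, MD.exp_smul_s8]
    rw [← Finset.sum_add_distrib, ← Finset.sum_add_distrib]
    exact Finset.sum_congr rfl fun i _ => by rw [← mul_add, ← mul_add, ih i]

lemma seq_invariant (hp1 : p ≤ 1) (hq : (1 : ℝ≥0) - p ≠ 0) (μs : ℕ → MD ℕ) (hseq : P.RedSeq μs) (n : ℕ) :
    MD.wt (μs n) + MD.exp (fun a => (p / (1 - p)) ^ a) (μs 0)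
      = MD.wt (μs 0) + MD.exp (fun a => (p / (1 - p)) ^ a) (μs n) := by
  set f : ℕ → ℝ≥0 := fun a => (p / (1 - p)) ^ a
  induction n with
  | zero => rfl
  | succ n ih =>
    have h := step_invariant hP hp1 hq (hseq n)
    have key : MD.wt (μs (n + 1)) + MD.exp f (μs 0) + (MD.exp f (μs n) + MD.wt (μs n))
        = MD.wt (μs 0) + MD.exp f (μs (n + 1)) + (MD.exp f (μs n) + MD.wt (μs n)) := by
      calc MD.wt (μs (n + 1)) + MD.exp f (μs 0) + (MD.exp f (μs n) + MD.wt (μs n))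
          = (MD.wt (μs (n + 1)) + MD.exp f (μs n)) + (MD.wt (μs n) + MD.exp f (μs 0)) := by
            ring
        _ = (MD.wt (μs n) + MD.exp f (μs (n + 1))) + (MD.wt (μs 0) + MD.exp f (μs n)) := by
            rw [h, ih]
        _ = MD.wt (μs 0) + MD.exp f (μs (n + 1)) + (MD.exp f (μs n) + MD.wt (μs n)) := by
            ring
    exact add_right_cancel key

end MainLemmas

lemma exp_v_tendsto_zero {p : ℝ≥0} (hp1 : p ≤ 1) (hp : 1 / 2 ≤ p) (μ : MD ℕ) :
    Filter.Tendsto (fun n => MD.exp (v p n) μ) Filter.atTop (nhds 0) := by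
  induction μ using Multiset.induction with
  | empty => simpa using (tendsto_const_nhds : Filter.Tendsto (fun _ : ℕ => (0:ℝ≥0)) _ _)
  | cons pa μ ih =>
    have hcons : ∀ n, MD.exp (v p n) (pa ::ₘ μ) = pa.1 * v p n pa.2 + MD.exp (v p n) μ := by
      intro n; simp [MD.exp]
    have h1 : Filter.Tendsto (fun n => pa.1 * v p n pa.2) Filter.atTop (nhds 0) := by
      have := (tendsto_v_zero hp1 hp pa.2).const_mul pa.1
      simpa using this
    have := h1.add ih
    rw [add_zero] at this
    exact this.congr fun n => (hcons n).symm

/-- the random walk on `ℕ` with bias `p` is AST iff `p ≥ 1/2`. -/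
theorem stmt_8 (p : ℝ≥0) (hp1 : p ≤ 1) (P : PARS ℕ)
    (hP : ∀ (a : ℕ) (d : FinDist ℕ), P a d ↔ ∃ m : ℕ, a = m + 1 ∧
      ∀ k : ℕ, d.w k = if k = m then p else if k = m + 2 then 1 - p else 0) :
    P.AST ↔ 1 / 2 ≤ p := by
  constructor
  · intro hAST
    by_contra hp
    push_neg at hp
    -- build an infinite reduction sequence from {(1, 1)}
    have hsing := step_singleton p hP hp1
    let S := {μ : MD ℕ // MD.wt μ ≤ 1}
    let g : S → S := fun x =>
      ⟨(exists_step hsing x.1 x.2).choose,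
        (wt_le_of_step (exists_step hsing x.1 x.2).choose_spec).trans x.2⟩
    let x0 : S := ⟨{(1, 1)}, by rw [MD.wt_single]⟩
    let μs : ℕ → MD ℕ := fun n => (g^[n] x0).1
    have hseq : P.RedSeq μs := by
      intro n
      have hiter : μs (n + 1) = (g (g^[n] x0)).1 := by
        show (g^[n+1] x0).1 = _
        rw [Function.iterate_succ_apply']
      rw [hiter]
      exact (exists_step hsing (g^[n] x0).1 (g^[n] x0).2).choose_spec
    have hμ0 : μs 0 = {(1, 1)} := rfl
    set q : ℝ≥0 := 1 - p with hqdef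
    set r : ℝ≥0 := p / q with hrdef
    have hpp : p + p < 1 := by
      calc p + p < 1 / 2 + 1 / 2 := add_lt_add hp hp
        _ = 1 := by rw [add_halves]
    have hpq : p < q := lt_tsub_iff_left.2 hpp
    have hq0 : 0 < q := lt_of_le_of_lt (zero_le (a := p)) hpq
    have hr1 : r < 1 := (div_lt_one hq0).2 hpq
    have hinv := seq_invariant hP hp1 (by rw [← hqdef]; exact hq0.ne') μs hseq
    have hexp0 : MD.exp (fun a => (p / (1 - p)) ^ a) (μs 0) = r := by
      rw [hμ0, MD.exp_single, one_mul, ← hqdef, ← hrdef, pow_one]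
    have hwt0 : MD.wt (μs 0) = 1 := by rw [hμ0, MD.wt_single]
    have hge : ∀ n, 1 ≤ MD.wt (μs n) + r := by
      intro n
      have := hinv n
      rw [hexp0, hwt0] at this
      rw [this]
      exact le_add_right le_rfl
    have htend := hAST μs hseq
    have hpos : (0 : ℝ≥0) < 1 - r := tsub_pos_of_lt hr1
    obtain ⟨n, hn⟩ := (htend.eventually_lt_const hpos).exists
    have : MD.wt (μs n) + r < 1 := by
      calc MD.wt (μs n) + r < (1 - r) + r := by exact add_lt_add_left hn r
        _ = 1 := tsub_add_cancel_of_le hr1.le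
    exact absurd (hge n) (not_le.2 this)
  · intro hp μs hseq
    refine tendsto_of_tendsto_of_tendsto_of_le_of_le tendsto_const_nhds
      (exp_v_tendsto_zero hp1 hp (μs 0)) (fun n => zero_le)
      (fun n => wt_le_exp_v hP n μs hseq)
end
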